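/- arXiv:2412.09598 — 3 statements merged into one kernel-verified Lean document; each statement's English description precedes it below -/
import Mathlib

section
/- Let Λ be a finite set, M a column-stochastic matrix on Λ (nonnegative entries, each column summing to 1), and π a probability vector with Mπ = π. Let Λ = A ⊎ B₁ ⊎ B₂ ⊎ C be a partition into four pairwise disjoint sets such that P_{B₂∪C} M P_A = 0 and P_{A∪B₁} M P_C = 0. Assume π(A) > 0 and define the projected distribution π_A = P_A π / π(A). Then ‖M π_A − π_A‖₁ ≤ 2 π(B₁ ∪ B₂) / π(A). -/
open Matrix Finset

/-- The diagonal 0/1 projection matrix onto the coordinates in the set `S`. -/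
def setProj {Λ : Type*} [Fintype Λ] [DecidableEq Λ] (S : Finset Λ) : Matrix Λ Λ ℝ :=
  Matrix.diagonal fun x => if x ∈ S then 1 else 0

/-- **Classical Bottleneck Theorem.**  Let `M` be a column-stochastic matrix on a finite
state space `Λ` with steady state `π`, and let `Λ = A ⊎ B₁ ⊎ B₂ ⊎ C` be a partition into
four pairwise disjoint sets with `P_{B₂∪C} M P_A = 0` and `P_{A∪B₁} M P_C = 0`.  If
`π(A) > 0` and `π_A = P_A π / π(A)`, then `‖M π_A − π_A‖₁ ≤ 2 π(B₁ ∪ B₂) / π(A)`. -/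
theorem classical_bottleneck {Λ : Type*} [Fintype Λ] [DecidableEq Λ]
    (M : Matrix Λ Λ ℝ)
    (hMnonneg : ∀ i j, 0 ≤ M i j)
    (hMcol : ∀ j, ∑ i, M i j = 1)
    (π : Λ → ℝ)
    (hπnonneg : ∀ x, 0 ≤ π x)
    (hπsum : ∑ x, π x = 1)
    (hsteady : M.mulVec π = π)
    (A B₁ B₂ C : Finset Λ)
    (hAB₁ : Disjoint A B₁) (hAB₂ : Disjoint A B₂) (hAC : Disjoint A C)
    (hB₁B₂ : Disjoint B₁ B₂) (hB₁C : Disjoint B₁ C) (hB₂C : Disjoint B₂ C)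
    (hcover : A ∪ B₁ ∪ B₂ ∪ C = Finset.univ)
    (hcond₁ : setProj (B₂ ∪ C) * M * setProj A = 0)
    (hcond₂ : setProj (A ∪ B₁) * M * setProj C = 0)
    (hA : 0 < ∑ x ∈ A, π x)
    (πA : Λ → ℝ)
    (hπA : πA = fun x => (setProj A).mulVec π x / ∑ x ∈ A, π x) :
    ∑ x, |M.mulVec πA x - πA x| ≤ 2 * (∑ x ∈ B₁ ∪ B₂, π x) / ∑ x ∈ A, π x := by
  set a : ℝ := ∑ x ∈ A, π x with ha
  -- entrywise consequences of the block conditions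
  have hM1 : ∀ x ∈ B₂ ∪ C, ∀ j ∈ A, M x j = 0 := by
    intro x hx j hj
    have h := congrFun (congrFun hcond₁ x) j
    simp [setProj, Matrix.mul_diagonal, Matrix.diagonal_mul, hj] at h
    exact h (Finset.mem_union.mp hx)
  have hM2 : ∀ x ∈ A ∪ B₁, ∀ j ∈ C, M x j = 0 := by
    intro x hx j hj
    have h := congrFun (congrFun hcond₂ x) j
    simp [setProj, Matrix.mul_diagonal, Matrix.diagonal_mul, hj] at h
    exact h (Finset.mem_union.mp hx)
  have hπA' : ∀ x, πA x = (if x ∈ A then π x else 0) / a := by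
    intro x
    simp [hπA, setProj, Matrix.mulVec_diagonal, ite_mul]
  -- F x = ∑_{j ∈ A} M x j * π j
  set F : Λ → ℝ := fun x => ∑ j ∈ A, M x j * π j with hF
  have hMv : ∀ x, M.mulVec πA x = F x / a := by
    intro x
    have h1 : ∀ j, M x j * ((if j ∈ A then π j else 0) / a)
        = (if j ∈ A then M x j * π j else 0) / a := by
      intro j; by_cases h : j ∈ A <;> simp [h, mul_div_assoc]
    simp only [Matrix.mulVec, dotProduct, hπA', h1, ← Finset.sum_div]
    rw [Finset.sum_ite_mem, Finset.univ_inter]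
  have hsteady' : ∀ x, ∑ j, M x j * π j = π x := by
    intro x
    have := congrFun hsteady x
    simpa [Matrix.mulVec, dotProduct] using this
  have hsplit : ∀ g : Λ → ℝ, ∑ x, g x
      = ∑ x ∈ A, g x + ∑ x ∈ B₁, g x + ∑ x ∈ B₂, g x + ∑ x ∈ C, g x := by
    intro g
    have hd2 : Disjoint (A ∪ B₁) B₂ := Finset.disjoint_union_left.mpr ⟨hAB₂, hB₁B₂⟩
    have hd3 : Disjoint (A ∪ B₁ ∪ B₂) C :=
      Finset.disjoint_union_left.mpr ⟨Finset.disjoint_union_left.mpr ⟨hAC, hB₁C⟩, hB₂C⟩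
    rw [← hcover, Finset.sum_union hd3, Finset.sum_union hd2, Finset.sum_union hAB₁]
  -- reduce to the unnormalized inequality
  have main : ∑ x, |F x - (if x ∈ A then π x else 0)| ≤ 2 * ∑ x ∈ B₁ ∪ B₂, π x := by
    rw [hsplit]
    -- on A
    have hOnA : ∀ x ∈ A, |F x - (if x ∈ A then π x else 0)|
        = (∑ j ∈ B₁, M x j * π j) + ∑ j ∈ B₂, M x j * π j := by
      intro x hx
      have hπx : π x = F x + (∑ j ∈ B₁, M x j * π j) + ∑ j ∈ B₂, M x j * π j := by
        have hC0 : ∑ j ∈ C, M x j * π j = 0 :=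
          Finset.sum_eq_zero fun j hj => by
            rw [hM2 x (Finset.mem_union_left _ hx) j hj, zero_mul]
        rw [← hsteady' x, hsplit (fun j => M x j * π j), hC0, add_zero]
      have h1 : 0 ≤ ∑ j ∈ B₁, M x j * π j :=
        Finset.sum_nonneg fun j _ => mul_nonneg (hMnonneg x j) (hπnonneg j)
      have h2 : 0 ≤ ∑ j ∈ B₂, M x j * π j :=
        Finset.sum_nonneg fun j _ => mul_nonneg (hMnonneg x j) (hπnonneg j)
      rw [if_pos hx, hπx]
      rw [abs_sub_comm]
      rw [abs_of_nonneg (by linarith)]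
      ring
    -- on B₁
    have hOnB₁ : ∀ x ∈ B₁, |F x - (if x ∈ A then π x else 0)| = F x := by
      intro x hx
      have hxA : x ∉ A := Finset.disjoint_right.mp hAB₁ hx
      rw [if_neg hxA, sub_zero, abs_of_nonneg]
      exact Finset.sum_nonneg fun j _ => mul_nonneg (hMnonneg x j) (hπnonneg j)
    -- on B₂ and C terms vanish
    have hOnB₂ : ∀ x ∈ B₂, |F x - (if x ∈ A then π x else 0)| = 0 := by
      intro x hx
      have hxA : x ∉ A := Finset.disjoint_right.mp hAB₂ hx
      have hF0 : F x = 0 :=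
        Finset.sum_eq_zero fun j hj => by
          rw [hM1 x (Finset.mem_union_left _ hx) j hj, zero_mul]
      simp [hF0, hxA]
    have hOnC : ∀ x ∈ C, |F x - (if x ∈ A then π x else 0)| = 0 := by
      intro x hx
      have hxA : x ∉ A := Finset.disjoint_right.mp hAC hx
      have hF0 : F x = 0 :=
        Finset.sum_eq_zero fun j hj => by
          rw [hM1 x (Finset.mem_union_right _ hx) j hj, zero_mul]
      simp [hF0, hxA]
    rw [Finset.sum_congr rfl hOnA, Finset.sum_congr rfl hOnB₁,
       Finset.sum_eq_zero hOnB₂, Finset.sum_eq_zero hOnC]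
    -- bounds
    have hT1 : ∑ x ∈ A, ∑ j ∈ B₁, M x j * π j ≤ ∑ j ∈ B₁, π j := by
      rw [Finset.sum_comm]
      apply Finset.sum_le_sum
      intro j hj
      rw [← Finset.sum_mul]
      calc (∑ x ∈ A, M x j) * π j ≤ 1 * π j := by
            apply mul_le_mul_of_nonneg_right _ (hπnonneg j)
            rw [← hMcol j]
            exact Finset.sum_le_sum_of_subset_of_nonneg (Finset.subset_univ A)
              fun i _ _ => hMnonneg i j
        _ = π j := one_mul _
    have hT2 : ∑ x ∈ A, ∑ j ∈ B₂, M x j * π j ≤ ∑ j ∈ B₂, π j := by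
      rw [Finset.sum_comm]
      apply Finset.sum_le_sum
      intro j hj
      rw [← Finset.sum_mul]
      calc (∑ x ∈ A, M x j) * π j ≤ 1 * π j := by
            apply mul_le_mul_of_nonneg_right _ (hπnonneg j)
            rw [← hMcol j]
            exact Finset.sum_le_sum_of_subset_of_nonneg (Finset.subset_univ A)
              fun i _ _ => hMnonneg i j
        _ = π j := one_mul _
    have hT3 : ∑ x ∈ B₁, F x ≤ ∑ x ∈ B₁, π x := by
      apply Finset.sum_le_sum
      intro x hx
      calc F x ≤ ∑ j, M x j * π j :=
            Finset.sum_le_sum_of_subset_of_nonneg (Finset.subset_univ A)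
              fun j _ _ => mul_nonneg (hMnonneg x j) (hπnonneg j)
        _ = π x := hsteady' x
    have hB₁nn : 0 ≤ ∑ x ∈ B₁, π x := Finset.sum_nonneg fun x _ => hπnonneg x
    have hB₂nn : 0 ≤ ∑ x ∈ B₂, π x := Finset.sum_nonneg fun x _ => hπnonneg x
    rw [Finset.sum_union hB₁B₂, Finset.sum_add_distrib]
    linarith
  -- now normalize
  have hLHS : ∑ x, |M.mulVec πA x - πA x|
      = (∑ x, |F x - (if x ∈ A then π x else 0)|) / a := by
    rw [Finset.sum_div]
    apply Finset.sum_congr rfl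
    intro x _
    rw [hMv x, hπA' x, div_sub_div_same, abs_div, abs_of_pos hA]
  rw [hLHS]
  exact (div_le_div_iff_of_pos_right hA).mpr main
end

section
/- Let M be a quantum channel on d×d complex matrices with Kraus operators (K_i) and steady state ρ. Let P_𝒜, P_{ℬ₁}, P_{ℬ₂}, P_𝒞 be orthogonal projectors onto four pairwise orthogonal subspaces whose sum is the identity (pairwise products vanish and P_𝒜 + P_{ℬ₁} + P_{ℬ₂} + P_𝒞 = 1). Assume every Kraus operator satisfies (P_{ℬ₂} + P_𝒞) K_i P_𝒜 = 0 and (P_𝒜 + P_{ℬ₁}) K_i P_𝒞 = 0. Assume tr(P_𝒜 ρ) > 0 and set ρ_𝒜 = P_𝒜 ρ P_𝒜 / tr(P_𝒜 ρ) and P_ℬ = P_{ℬ₁} + P_{ℬ₂}. Then ‖M(ρ_𝒜) − ρ_𝒜‖₁ ≤ 10 ‖P_ℬ ρ‖₁ / tr(P_𝒜 ρ). -/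
open Matrix
open scoped ComplexOrder

/-- The trace norm (Schatten 1-norm) of a complex square matrix: `‖A‖₁ = tr √(AᴴA)`. -/
noncomputable def traceNorm {m : Type*} [Fintype m] [DecidableEq m] (A : Matrix m m ℂ) : ℝ :=
  (((Matrix.posSemidef_conjTranspose_mul_self A).1.eigenvectorUnitary : Matrix m m ℂ) *
    diagonal (((↑) : ℝ → ℂ) ∘ Real.sqrt ∘ (Matrix.posSemidef_conjTranspose_mul_self A).1.eigenvalues) *
    (star (Matrix.posSemidef_conjTranspose_mul_self A).1.eigenvectorUnitary : Matrix m m ℂ)).trace.re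

/-!
Write `σ = P_𝒜 ρ P_𝒜`, `p = P_𝒜 + P_ℬ₁`, `s = P_𝒜 + P_𝒞` and `b = P_ℬ₁ + P_ℬ₂`, so that
`ρ = σ + (P_𝒜 ρ P_𝒞 + P_𝒞 ρ s) + Y` with `Y = bρ + sρb`. The block conditions say that every
`Kᵢ P_𝒜` lands in the range of `p` while `p Kᵢ P_𝒞 = 0`; together with `M(ρ) = ρ` this gives
`M(σ) - σ = p (Y - M(Y)) p`. Now `‖A‖₁` is the maximum of `Re tr(BA)` over contractions `B`
(attained at the adjoint of the polar isometry of `A`), compressions by `p` and the dual channel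
`C ↦ ∑ Kᵢᴴ C Kᵢ` preserve contractions, and each of the two terms of `Y` pairs with a
contraction to at most `‖bρ‖₁`. Hence `‖M(σ) - σ‖₁ ≤ 4 ‖bρ‖₁`.
-/

namespace Matrix

variable {n : Type*} [Fintype n]

section Kraus

variable {ι : Type*} [Fintype ι]

def krausMap (K : ι → Matrix n n ℂ) : Matrix n n ℂ →ₗ[ℂ] Matrix n n ℂ where
  toFun X := ∑ i, K i * X * (K i)ᴴ
  map_add' X Y := by simp only [Matrix.mul_add, Matrix.add_mul, Finset.sum_add_distrib]
  map_smul' c X := by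
    simp only [Matrix.mul_smul, Matrix.smul_mul, Finset.smul_sum, RingHom.id_apply]

variable (K : ι → Matrix n n ℂ)

lemma krausMap_apply (X : Matrix n n ℂ) : krausMap K X = ∑ i, K i * X * (K i)ᴴ := rfl

lemma conjTranspose_krausMap (X : Matrix n n ℂ) : (krausMap K X)ᴴ = krausMap K Xᴴ := by
  simp only [krausMap_apply, conjTranspose_sum, conjTranspose_mul, conjTranspose_conjTranspose,
    Matrix.mul_assoc]

lemma trace_mul_krausMap (C X : Matrix n n ℂ) :
    (C * krausMap K X).trace = (krausMap (fun i => (K i)ᴴ) C * X).trace := by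
  simp only [krausMap_apply, conjTranspose_conjTranspose, Finset.mul_sum, Finset.sum_mul,
    trace_sum]
  refine Finset.sum_congr rfl fun i _ => ?_
  rw [← Matrix.mul_assoc, ← Matrix.mul_assoc, trace_mul_cycle]
  simp only [Matrix.mul_assoc]

lemma mul_krausMap_mul_eq_zero {p Q : Matrix n n ℂ} (h : ∀ i, p * K i * Q = 0)
    (X : Matrix n n ℂ) : p * krausMap K (Q * X) = 0 := by
  simp only [krausMap_apply, Finset.mul_sum, ← Matrix.mul_assoc, h, Matrix.zero_mul,
    Finset.sum_const_zero]

lemma krausMap_mul_mul_eq_zero {p Q : Matrix n n ℂ} (hp : pᴴ = p) (hQ : Qᴴ = Q)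
    (h : ∀ i, p * K i * Q = 0) (X : Matrix n n ℂ) : krausMap K (X * Q) * p = 0 := by
  rw [← conjTranspose_eq_zero, conjTranspose_mul, conjTranspose_krausMap, conjTranspose_mul, hp,
    hQ]
  exact mul_krausMap_mul_eq_zero K h _

lemma mul_krausMap_mul_eq_of_mul_mul_eq {p Q : Matrix n n ℂ} (hp : pᴴ = p) (hQ : Qᴴ = Q)
    (h : ∀ i, p * K i * Q = K i * Q) (X : Matrix n n ℂ) :
    p * krausMap K (Q * X * Q) * p = krausMap K (Q * X * Q) := by
  simp only [krausMap_apply, Finset.mul_sum, Finset.sum_mul]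
  refine Finset.sum_congr rfl fun i _ => ?_
  calc p * (K i * (Q * X * Q) * (K i)ᴴ) * p = p * K i * Q * X * (p * K i * Q)ᴴ := by
        simp only [conjTranspose_mul, hp, hQ, Matrix.mul_assoc]
    _ = K i * (Q * X * Q) * (K i)ᴴ := by
        simp only [h, conjTranspose_mul, hQ, Matrix.mul_assoc]

end Kraus

variable [DecidableEq n]

/-- `‖B‖ ≤ 1` in operator norm; both `BᴴB ≤ 1` and `BBᴴ ≤ 1` are recorded so that contractions
are visibly closed under `ᴴ`. -/
def IsContraction (B : Matrix n n ℂ) : Prop :=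
  (1 - Bᴴ * B).PosSemidef ∧ (1 - B * Bᴴ).PosSemidef

lemma posSemidef_one_sub_conjTranspose_mul_mul {X Y : Matrix n n ℂ}
    (hX : (1 - Xᴴ * X).PosSemidef) (hY : (1 - Yᴴ * Y).PosSemidef) :
    (1 - (X * Y)ᴴ * (X * Y)).PosSemidef := by
  have h : 1 - (X * Y)ᴴ * (X * Y) = Yᴴ * (1 - Xᴴ * X) * Y + (1 - Yᴴ * Y) := by
    simp only [conjTranspose_mul]; noncomm_ring
  rw [h]
  exact (hX.conjTranspose_mul_mul_same Y).add hY

namespace IsContraction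

lemma conjTranspose {B : Matrix n n ℂ} (h : IsContraction B) : IsContraction Bᴴ := by
  simpa only [IsContraction, conjTranspose_conjTranspose] using h.symm

lemma mul {X Y : Matrix n n ℂ} (hX : IsContraction X) (hY : IsContraction Y) :
    IsContraction (X * Y) :=
  ⟨posSemidef_one_sub_conjTranspose_mul_mul hX.1 hY.1, by
    simpa only [conjTranspose_mul, conjTranspose_conjTranspose] using
      posSemidef_one_sub_conjTranspose_mul_mul hY.conjTranspose.1 hX.conjTranspose.1⟩

lemma neg {B : Matrix n n ℂ} (h : IsContraction B) : IsContraction (-B) := by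
  simpa only [IsContraction, conjTranspose_neg, neg_mul_neg] using h

end IsContraction

lemma posSemidef_one_sub_of_isIdempotentElem {E : Matrix n n ℂ} (hE : Eᴴ = E)
    (hE2 : IsIdempotentElem E) : (1 - E).PosSemidef := by
  have h : 1 - E = (1 - E)ᴴ * (1 - E) := by
    rw [conjTranspose_sub, conjTranspose_one, hE, sub_mul, mul_sub, mul_sub, hE2.eq]
    noncomm_ring
  rw [h]
  exact posSemidef_conjTranspose_mul_self _

lemma mul_eq_self_of_conjTranspose_mul_self_mul_eq {X E : Matrix n n ℂ} (hE : Eᴴ = E)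
    (h : Xᴴ * X * E = Xᴴ * X) : X * E = X := by
  have h' : E * (Xᴴ * X) = Xᴴ * X := by
    simpa only [conjTranspose_mul, conjTranspose_conjTranspose, hE, Matrix.mul_assoc]
      using congrArg conjTranspose h
  have h0 : (X * E - X)ᴴ * (X * E - X) = 0 := by
    simp only [conjTranspose_sub, conjTranspose_mul, hE]
    calc (E * Xᴴ - Xᴴ) * (X * E - X)
        = E * (Xᴴ * X * E) - E * (Xᴴ * X) - Xᴴ * X * E + Xᴴ * X := by noncomm_ring
      _ = 0 := by rw [h, h']; abel
  exact sub_eq_zero.mp (conjTranspose_mul_self_eq_zero.mp h0)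

lemma isContraction_of_isIdempotentElem_conjTranspose_mul_self {W : Matrix n n ℂ}
    (hW : IsIdempotentElem (Wᴴ * W)) : IsContraction W := by
  have hWW : W * (Wᴴ * W) = W :=
    mul_eq_self_of_conjTranspose_mul_self_mul_eq (by simp) hW.eq
  refine ⟨posSemidef_one_sub_of_isIdempotentElem (by simp) hW,
    posSemidef_one_sub_of_isIdempotentElem (by simp) ?_⟩
  change W * Wᴴ * (W * Wᴴ) = W * Wᴴ
  rw [Matrix.mul_assoc, ← Matrix.mul_assoc Wᴴ, ← Matrix.mul_assoc, hWW]

lemma IsStarProjection.isContraction {P : Matrix n n ℂ} (hP : IsStarProjection P) :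
    IsContraction P := by
  apply isContraction_of_isIdempotentElem_conjTranspose_mul_self
  rw [← star_eq_conjTranspose, hP.isSelfAdjoint.star_eq, hP.isIdempotentElem.eq]
  exact hP.isIdempotentElem

lemma continuousOn_spectrum (f : ℝ → ℝ) (A : Matrix n n ℂ) : ContinuousOn f (spectrum ℝ A) :=
  A.finite_real_spectrum.continuousOn f

lemma conjTranspose_cfc (f : ℝ → ℝ) (A : Matrix n n ℂ) : (cfc f A)ᴴ = cfc f A := by
  rw [← star_eq_conjTranspose]
  exact (cfc_predicate f A).star_eq

lemma nonneg_of_mem_spectrum_conjTranspose_mul_self {A : Matrix n n ℂ} {x : ℝ}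
    (hx : x ∈ spectrum ℝ (Aᴴ * A)) : 0 ≤ x := by
  have hA := posSemidef_conjTranspose_mul_self A
  obtain ⟨i, rfl⟩ := hA.1.spectrum_real_eq_range_eigenvalues ▸ hx
  exact hA.eigenvalues_nonneg i

/-- The `W` of the polar decomposition `A = W √(AᴴA)`: since `(√x)⁻¹ = 0` for `x ≤ 0`, the
factor `cfc (√·)⁻¹ (AᴴA)` is the inverse of `√(AᴴA)` on its support and `0` on the kernel. -/
noncomputable def polarIsometry (A : Matrix n n ℂ) : Matrix n n ℂ :=
  A * cfc (fun x : ℝ => (√x)⁻¹) (Aᴴ * A)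

lemma conjTranspose_polarIsometry_mul (A : Matrix n n ℂ) :
    (polarIsometry A)ᴴ * A = cfc Real.sqrt (Aᴴ * A) := by
  have hid := cfc_id' ℝ (Aᴴ * A) (IsSelfAdjoint.star_mul_self A)
  rw [polarIsometry, conjTranspose_mul, conjTranspose_cfc, Matrix.mul_assoc]
  nth_rw 2 [← hid]
  rw [← cfc_mul _ _ _ (continuousOn_spectrum _ _)]
  simp only [inv_mul_eq_div, Real.div_sqrt]

lemma isIdempotentElem_conjTranspose_polarIsometry_mul_self (A : Matrix n n ℂ) :
    IsIdempotentElem ((polarIsometry A)ᴴ * polarIsometry A) := by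
  have h : (polarIsometry A)ᴴ * polarIsometry A
      = cfc Real.sqrt (Aᴴ * A) * cfc (fun x : ℝ => (√x)⁻¹) (Aᴴ * A) := by
    rw [← conjTranspose_polarIsometry_mul, Matrix.mul_assoc]; rfl
  rw [h, ← cfc_mul _ _ _ (by fun_prop) (continuousOn_spectrum _ _), IsIdempotentElem,
    ← cfc_mul _ _ _ (continuousOn_spectrum _ _) (continuousOn_spectrum _ _)]
  congr 1
  funext x
  rcases eq_or_ne (√x) 0 with h | h <;> simp [h]

lemma polarIsometry_mul_cfc_sqrt (A : Matrix n n ℂ) :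
    polarIsometry A * cfc Real.sqrt (Aᴴ * A) = A := by
  have hH : IsSelfAdjoint (Aᴴ * A) := IsSelfAdjoint.star_mul_self A
  rw [polarIsometry, Matrix.mul_assoc, ← cfc_mul _ _ _ (continuousOn_spectrum _ _)]
  refine mul_eq_self_of_conjTranspose_mul_self_mul_eq (conjTranspose_cfc _ _) ?_
  calc Aᴴ * A * cfc (fun x => (√x)⁻¹ * √x) (Aᴴ * A)
      = cfc id (Aᴴ * A) * cfc (fun x => (√x)⁻¹ * √x) (Aᴴ * A) := by rw [cfc_id ℝ _ hH]
    _ = cfc (fun x => id x * ((√x)⁻¹ * √x)) (Aᴴ * A) :=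
        (cfc_mul _ _ _ (by fun_prop) (continuousOn_spectrum _ _)).symm
    _ = cfc id (Aᴴ * A) := by
        refine cfc_congr fun x hx => ?_
        rcases eq_or_ne (√x) 0 with h | h
        · simp [(Real.sqrt_eq_zero (nonneg_of_mem_spectrum_conjTranspose_mul_self hx)).mp h]
        · simp [h]
    _ = Aᴴ * A := cfc_id ℝ _ hH

lemma isContraction_polarIsometry (A : Matrix n n ℂ) : IsContraction (polarIsometry A) :=
  isContraction_of_isIdempotentElem_conjTranspose_mul_self
    (isIdempotentElem_conjTranspose_polarIsometry_mul_self A)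

lemma re_trace_mul_mul_conjTranspose_le {X : Matrix n n ℂ} (hX : (1 - Xᴴ * X).PosSemidef)
    (C : Matrix n n ℂ) : (X * (C * Cᴴ)).trace.re ≤ (C * Cᴴ).trace.re := by
  have hpos := ((posSemidef_conjTranspose_mul_self (C - X * C)).add
    (hX.conjTranspose_mul_mul_same C)).trace_nonneg
  have hsum : (C - X * C)ᴴ * (C - X * C) + Cᴴ * (1 - Xᴴ * X) * C
      = 2 • (Cᴴ * C) - Cᴴ * X * C - (Cᴴ * X * C)ᴴ := by
    simp only [conjTranspose_sub, conjTranspose_mul, conjTranspose_conjTranspose,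
      Matrix.mul_assoc]
    noncomm_ring
  rw [hsum, trace_sub, trace_sub, trace_conjTranspose, trace_smul] at hpos
  have hre := (Complex.nonneg_iff.mp hpos).1
  simp only [Complex.sub_re, Complex.star_def, Complex.conj_re, nsmul_eq_mul, Nat.cast_ofNat,
    Complex.mul_re, Complex.re_ofNat, Complex.im_ofNat, zero_mul, sub_zero] at hre
  rw [← Matrix.mul_assoc, trace_mul_cycle, trace_mul_comm C]
  linarith

lemma posSemidef_one_sub_conjTranspose_mul_self_krausMap {ι : Type*} [Fintype ι]
    {K : ι → Matrix n n ℂ} (hK : ∑ i, K i * (K i)ᴴ = 1) {C : Matrix n n ℂ}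
    (hC : (1 - Cᴴ * C).PosSemidef) : (1 - (krausMap K C)ᴴ * krausMap K C).PosSemidef := by
  set T := krausMap K C
  have hT : Tᴴ = ∑ i, K i * Cᴴ * (K i)ᴴ := conjTranspose_krausMap K C
  have key : 1 - Tᴴ * T = ∑ i, (K i * (1 - Cᴴ * C) * (K i)ᴴ
      + (C * (K i)ᴴ - (K i)ᴴ * T)ᴴ * (C * (K i)ᴴ - (K i)ᴴ * T)) := by
    have hterm : ∀ i, K i * (1 - Cᴴ * C) * (K i)ᴴ
        + (C * (K i)ᴴ - (K i)ᴴ * T)ᴴ * (C * (K i)ᴴ - (K i)ᴴ * T)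
        = K i * (K i)ᴴ - K i * Cᴴ * (K i)ᴴ * T - Tᴴ * (K i * C * (K i)ᴴ)
          + Tᴴ * (K i * (K i)ᴴ) * T := fun i => by
      simp only [conjTranspose_sub, conjTranspose_mul, conjTranspose_conjTranspose]
      noncomm_ring
    rw [Finset.sum_congr rfl fun i _ => hterm i]
    simp only [Finset.sum_add_distrib, Finset.sum_sub_distrib, ← Finset.sum_mul,
      ← Finset.mul_sum, hK, ← hT]
    change 1 - Tᴴ * T = 1 - Tᴴ * T - Tᴴ * T + Tᴴ * 1 * T
    rw [Matrix.mul_one]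
    abel
  rw [key]
  exact posSemidef_sum _ fun i _ =>
    (hC.mul_mul_conjTranspose_same (K i)).add (posSemidef_conjTranspose_mul_self _)

lemma IsContraction.krausMap {ι : Type*} [Fintype ι] {K : ι → Matrix n n ℂ}
    (hK : ∑ i, K i * (K i)ᴴ = 1) {C : Matrix n n ℂ} (hC : IsContraction C) :
    IsContraction (krausMap K C) := by
  refine ⟨posSemidef_one_sub_conjTranspose_mul_self_krausMap hK hC.1, ?_⟩
  simpa only [conjTranspose_krausMap, conjTranspose_conjTranspose] using
    posSemidef_one_sub_conjTranspose_mul_self_krausMap hK hC.conjTranspose.1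

lemma krausMap_corner_sub_corner {ι : Type*} [Fintype ι] (K : ι → Matrix n n ℂ)
    {ρ PA PC b p : Matrix n n ℂ} (hρ : krausMap K ρ = ρ) (hsum : PA + PC + b = 1)
    (hp : pᴴ = p) (hA : PAᴴ = PA) (hC : PCᴴ = PC) (hpA : p * PA = PA) (hpC : p * PC = 0)
    (hKA : ∀ i, p * K i * PA = K i * PA) (hKC : ∀ i, p * K i * PC = 0) :
    krausMap K (PA * ρ * PA) - PA * ρ * PA
      = p * (b * ρ + (PA + PC) * ρ * b - krausMap K (b * ρ + (PA + PC) * ρ * b)) * p := by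
  have hAp : PA * p = PA := by simpa [hp, hA] using congrArg conjTranspose hpA
  have hCp : PC * p = 0 := by simpa [hp, hC] using congrArg conjTranspose hpC
  set Y := b * ρ + (PA + PC) * ρ * b with hY
  set Z := PA * ρ * PC + PC * (ρ * (PA + PC)) with hZ
  have hρ_eq : PA * ρ * PA = ρ - (Z + Y) := by
    have hb : b * ρ = b * ρ * (PA + PC + b) := by rw [hsum, Matrix.mul_one]
    have hρ1 : ρ = (PA + PC + b) * ρ * (PA + PC + b) := by
      rw [hsum, Matrix.one_mul, Matrix.mul_one]
    rw [hY, hZ, hb]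
    nth_rw 2 [hρ1]
    noncomm_ring
  have hZp : p * Z * p = 0 := by
    calc p * Z * p = p * PA * ρ * (PC * p) + p * PC * (ρ * (PA + PC) * p) := by
          rw [hZ]; noncomm_ring
      _ = 0 := by rw [hCp, hpC, Matrix.mul_zero, Matrix.zero_mul, add_zero]
  have hMZp : p * krausMap K Z * p = 0 := by
    rw [hZ, map_add, Matrix.mul_add, Matrix.add_mul, mul_krausMap_mul_eq_zero K hKC,
      Matrix.mul_assoc p, krausMap_mul_mul_eq_zero K hp hC hKC, Matrix.mul_zero, Matrix.zero_mul,
      add_zero]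
  calc krausMap K (PA * ρ * PA) - PA * ρ * PA
      = p * (krausMap K (PA * ρ * PA) - PA * ρ * PA) * p := by
        rw [Matrix.mul_sub, Matrix.sub_mul, mul_krausMap_mul_eq_of_mul_mul_eq K hp hA hKA]
        simp only [← Matrix.mul_assoc, hpA]
        rw [Matrix.mul_assoc _ PA p, hAp]
    _ = p * (Z - krausMap K Z) * p + p * (Y - krausMap K Y) * p := by
        rw [hρ_eq, map_sub, hρ, map_add]
        noncomm_ring
    _ = p * (Y - krausMap K Y) * p := by
        rw [Matrix.mul_sub, Matrix.sub_mul, hZp, hMZp, sub_zero, zero_add]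

end Matrix

section TraceNorm

variable {n : Type*} [Fintype n] [DecidableEq n]

lemma traceNorm_eq_re_trace_cfc_sqrt (A : Matrix n n ℂ) :
    traceNorm A = (cfc Real.sqrt (Aᴴ * A)).trace.re := by
  rw [(posSemidef_conjTranspose_mul_self A).1.cfc_eq, IsHermitian.cfc,
    Unitary.conjStarAlgAut_apply]
  rfl

lemma re_trace_mul_le_traceNorm {B : Matrix n n ℂ}
    (hB : (1 - Bᴴ * B).PosSemidef) (A : Matrix n n ℂ) : (B * A).trace.re ≤ traceNorm A := by
  set S := cfc (fun x : ℝ => √(√x)) (Aᴴ * A)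
  have hS : S * Sᴴ = cfc Real.sqrt (Aᴴ * A) := by
    rw [conjTranspose_cfc, ← cfc_mul _ _ _ (by fun_prop) (by fun_prop)]
    simp only [Real.mul_self_sqrt (Real.sqrt_nonneg _)]
  have hBW : (1 - (B * polarIsometry A)ᴴ * (B * polarIsometry A)).PosSemidef :=
    posSemidef_one_sub_conjTranspose_mul_mul hB (isContraction_polarIsometry A).1
  calc (B * A).trace.re
      = (B * polarIsometry A * (S * Sᴴ)).trace.re := by
        rw [Matrix.mul_assoc, hS, polarIsometry_mul_cfc_sqrt]
    _ ≤ (S * Sᴴ).trace.re := re_trace_mul_mul_conjTranspose_le hBW S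
    _ = traceNorm A := by rw [hS, traceNorm_eq_re_trace_cfc_sqrt]

lemma traceNorm_nonneg (A : Matrix n n ℂ) :
    0 ≤ traceNorm A := by
  simpa using re_trace_mul_le_traceNorm (B := 0) (by simpa using PosSemidef.one) A

lemma traceNorm_le_of_forall_isContraction
    {A : Matrix n n ℂ} {c : ℝ} (h : ∀ B, IsContraction B → (B * A).trace.re ≤ c) :
    traceNorm A ≤ c := by
  simpa [conjTranspose_polarIsometry_mul, ← traceNorm_eq_re_trace_cfc_sqrt] using
    h _ (isContraction_polarIsometry A).conjTranspose

lemma traceNorm_smul_le {c : ℝ} (hc : 0 ≤ c)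
    (A : Matrix n n ℂ) : traceNorm (c • A) ≤ c * traceNorm A :=
  traceNorm_le_of_forall_isContraction fun B hB => by
    rw [mul_smul_comm, trace_smul, Complex.smul_re, smul_eq_mul]
    exact mul_le_mul_of_nonneg_left (re_trace_mul_le_traceNorm hB.1 A) hc

lemma re_trace_mul_add_le_two_mul_traceNorm
    {C s b ρ : Matrix n n ℂ} (hC : IsContraction C) (hs : IsContraction s) (hb : bᴴ = b)
    (hρ : ρᴴ = ρ) : (C * (b * ρ + s * ρ * b)).trace.re ≤ 2 * traceNorm (b * ρ) := by
  have hflip : (C * (s * ρ * b)).trace.re = ((C * s)ᴴ * (b * ρ)).trace.re := by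
    rw [← Complex.conj_re, ← Complex.star_def, ← trace_conjTranspose, trace_mul_comm (C * s)ᴴ]
    simp only [conjTranspose_mul, hb, hρ, Matrix.mul_assoc]
  rw [Matrix.mul_add, trace_add, Complex.add_re, hflip]
  linarith [re_trace_mul_le_traceNorm hC.1 (b * ρ),
    re_trace_mul_le_traceNorm (hC.mul hs).conjTranspose.1 (b * ρ)]

lemma traceNorm_mul_sub_krausMap_mul_le {ι : Type*} [Fintype ι]
    {K : ι → Matrix n n ℂ} (hK : ∑ i, (K i)ᴴ * K i = 1) {p s b ρ : Matrix n n ℂ}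
    (hp : IsContraction p) (hs : IsContraction s) (hb : bᴴ = b) (hρ : ρᴴ = ρ) :
    traceNorm (p * (b * ρ + s * ρ * b - krausMap K (b * ρ + s * ρ * b)) * p)
      ≤ 4 * traceNorm (b * ρ) := by
  refine traceNorm_le_of_forall_isContraction fun B hB => ?_
  set Y := b * ρ + s * ρ * b
  have hD : IsContraction (p * B * p) := (hp.mul hB).mul hp
  have hdual : IsContraction (krausMap (fun i => (K i)ᴴ) (-(p * B * p))) :=
    hD.neg.krausMap (by simpa only [conjTranspose_conjTranspose] using hK)
  have htr : (B * (p * (Y - krausMap K Y) * p)).trace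
      = (p * B * p * Y).trace + (krausMap (fun i => (K i)ᴴ) (-(p * B * p)) * Y).trace := by
    rw [map_neg, Matrix.neg_mul, trace_neg, ← sub_eq_add_neg, ← trace_mul_krausMap, ← trace_sub,
      ← Matrix.mul_sub, ← Matrix.mul_assoc, ← Matrix.mul_assoc, trace_mul_cycle]
    simp only [Matrix.mul_assoc]
  rw [htr, Complex.add_re]
  linarith [re_trace_mul_add_le_two_mul_traceNorm hD hs hb hρ,
    re_trace_mul_add_le_two_mul_traceNorm hdual hs hb hρ]

end TraceNorm

theorem quantum_bottleneck_general_general {d m : ℕ}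
    (K : Fin m → Matrix (Fin d) (Fin d) ℂ)
    (hK : ∑ i, (K i)ᴴ * K i = 1)
    (ρ : Matrix (Fin d) (Fin d) ℂ)
    (hρ : ρ.PosSemidef)
    (hsteady : ∑ i, K i * ρ * (K i)ᴴ = ρ)
    (PA PB₁ PB₂ PC : Matrix (Fin d) (Fin d) ℂ)
    (hPA : PAᴴ = PA ∧ PA * PA = PA) (hPB₁ : PB₁ᴴ = PB₁ ∧ PB₁ * PB₁ = PB₁)
    (hPB₂ : PB₂ᴴ = PB₂ ∧ PB₂ * PB₂ = PB₂) (hPC : PCᴴ = PC ∧ PC * PC = PC)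
    (horth : PA * PB₁ = 0 ∧ PA * PB₂ = 0 ∧ PA * PC = 0 ∧
             PB₁ * PB₂ = 0 ∧ PB₁ * PC = 0 ∧ PB₂ * PC = 0)
    (hsum : PA + PB₁ + PB₂ + PC = 1)
    (hcond : ∀ i, (PB₂ + PC) * K i * PA = 0 ∧ (PA + PB₁) * K i * PC = 0)
    (htrA : 0 < (PA * ρ).trace.re) :
    traceNorm
        ((∑ i, K i * (((PA * ρ).trace.re)⁻¹ • (PA * ρ * PA)) * (K i)ᴴ) -
          ((PA * ρ).trace.re)⁻¹ • (PA * ρ * PA))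
      ≤ 10 * traceNorm ((PB₁ + PB₂) * ρ) / (PA * ρ).trace.re := by
  set c := ((PA * ρ).trace.re)⁻¹
  have hc : 0 ≤ c := inv_nonneg.mpr htrA.le
  have hA : IsStarProjection PA := ⟨hPA.2, hPA.1⟩
  have hp : IsStarProjection (PA + PB₁) := hA.add ⟨hPB₁.2, hPB₁.1⟩ horth.1
  have hs : IsStarProjection (PA + PC) := hA.add ⟨hPC.2, hPC.1⟩ horth.2.2.1
  have hB₁A : PB₁ * PA = 0 := by simpa [hPA.1, hPB₁.1] using congrArg conjTranspose horth.1
  have hcorner := krausMap_corner_sub_corner K hsteady (b := PB₁ + PB₂)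
    (by rw [← hsum]; abel) hp.isSelfAdjoint hPA.1 hPC.1
    (by rw [Matrix.add_mul, hPA.2, hB₁A, add_zero])
    (by rw [Matrix.add_mul, horth.2.2.1, horth.2.2.2.2.1, add_zero])
    (fun i => by
      rw [show PA + PB₁ = 1 - (PB₂ + PC) by rw [← hsum]; abel, Matrix.sub_mul, Matrix.sub_mul,
        Matrix.one_mul, (hcond i).1, sub_zero])
    (fun i => (hcond i).2)
  have hbound := traceNorm_mul_sub_krausMap_mul_le hK hp.isContraction hs.isContraction
    (b := PB₁ + PB₂) (by rw [conjTranspose_add, hPB₁.1, hPB₂.1]) hρ.1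
  have hgoal : (∑ i, K i * (c • (PA * ρ * PA)) * (K i)ᴴ) - c • (PA * ρ * PA)
      = c • (krausMap K (PA * ρ * PA) - PA * ρ * PA) := by
    rw [smul_sub, ← LinearMap.map_smul_of_tower]; rfl
  rw [hgoal, hcorner, div_eq_mul_inv]
  calc _ ≤ c * (4 * traceNorm ((PB₁ + PB₂) * ρ)) :=
        (traceNorm_smul_le hc _).trans (mul_le_mul_of_nonneg_left hbound hc)
    _ ≤ 10 * traceNorm ((PB₁ + PB₂) * ρ) * c := by
        linarith [mul_nonneg hc (traceNorm_nonneg ((PB₁ + PB₂) * ρ))]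

/-- **Quantum Bottleneck Theorem (general case).**  Let `M(X) = ∑ i, Kᵢ X Kᵢᴴ` be a quantum
channel with steady state `ρ`, and let `P_𝒜, P_ℬ₁, P_ℬ₂, P_𝒞` be orthogonal projectors onto
four pairwise orthogonal subspaces summing to the identity, such that every Kraus operator
satisfies `(P_ℬ₂ + P_𝒞) Kᵢ P_𝒜 = 0` and `(P_𝒜 + P_ℬ₁) Kᵢ P_𝒞 = 0`.  If `tr(P_𝒜 ρ) > 0` and
`ρ_𝒜 = P_𝒜 ρ P_𝒜 / tr(P_𝒜 ρ)`, then `‖M(ρ_𝒜) − ρ_𝒜‖₁ ≤ 10 ‖(P_ℬ₁ + P_ℬ₂) ρ‖₁ / tr(P_𝒜 ρ)`. -/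
theorem quantum_bottleneck_general {d m : ℕ}
    (K : Fin m → Matrix (Fin d) (Fin d) ℂ)
    (hK : ∑ i, (K i)ᴴ * K i = 1)
    (ρ : Matrix (Fin d) (Fin d) ℂ)
    (hρ : ρ.PosSemidef) (hρtr : ρ.trace = 1)
    (hsteady : ∑ i, K i * ρ * (K i)ᴴ = ρ)
    (PA PB₁ PB₂ PC : Matrix (Fin d) (Fin d) ℂ)
    (hPA : PAᴴ = PA ∧ PA * PA = PA) (hPB₁ : PB₁ᴴ = PB₁ ∧ PB₁ * PB₁ = PB₁)
    (hPB₂ : PB₂ᴴ = PB₂ ∧ PB₂ * PB₂ = PB₂) (hPC : PCᴴ = PC ∧ PC * PC = PC)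
    (horth : PA * PB₁ = 0 ∧ PA * PB₂ = 0 ∧ PA * PC = 0 ∧
             PB₁ * PB₂ = 0 ∧ PB₁ * PC = 0 ∧ PB₂ * PC = 0)
    (hsum : PA + PB₁ + PB₂ + PC = 1)
    (hcond : ∀ i, (PB₂ + PC) * K i * PA = 0 ∧ (PA + PB₁) * K i * PC = 0)
    (htrA : 0 < (PA * ρ).trace.re) :
    traceNorm
        ((∑ i, K i * (((PA * ρ).trace.re)⁻¹ • (PA * ρ * PA)) * (K i)ᴴ) -
          ((PA * ρ).trace.re)⁻¹ • (PA * ρ * PA))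
      ≤ 10 * traceNorm ((PB₁ + PB₂) * ρ) / (PA * ρ).trace.re :=
  quantum_bottleneck_general_general K hK ρ hρ hsteady PA PB₁ PB₂ PC hPA hPB₁ hPB₂ hPC horth hsum
    hcond htrA
end

section
/- Let H₀ and V be Hermitian d×d complex matrices and n ≥ 1, g > 0, w > 0 reals. Assume: (i) whenever u and v are eigenvectors of H₀ with eigenvalues λ_u, λ_v satisfying |λ_u − λ_v| > w, one has ⟨u, V v⟩ = 0 (V only connects H₀-eigenstates with nearby energies); (ii) the operator norm of V satisfies ‖V‖ ≤ g·n. Let ψ be a unit eigenvector of H₀ + V with eigenvalue E ≤ ε₁·n, let ε₂ > ε₁ + 4g, and let Q_> be the orthogonal projector onto the span of the eigenvectors of H₀ with eigenvalue ≥ ε₂·n. Then for every real ΔE > w and every natural number q* ≥ 1 such that ((ε₂ + ε₁)/2 + 2g)·n + q*·ΔE ≤ ε₂·n, the tail bound ‖Q_> ψ‖ ≤ (2g/(ε₂ − ε₁))^{q*} holds. -/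
open Matrix
open scoped Matrix.Norms.L2Operator

open scoped InnerProductSpace

/-!
Expand in an orthonormal eigenbasis of `H₀` and let `P_t` project onto the eigenvectors with
energy `≥ t`. Projecting `(H₀ - E) ψ = -V ψ` with `P_t`, and using that `V` moves energy by at
most `w`, gives `(t - E) ‖P_t ψ‖ ≤ ‖V‖ ‖P_{t-w} ψ‖`. From `t₀ = ((ε₂ + ε₁)/2 + 2g) n` on,
`‖V‖ / (t - E) ≤ 2g / (ε₂ - ε₁)`, so each of the `q*` steps of size `ΔE > w` up to `ε₂ n` gains this
factor. Finally `Q_>` projects onto a subspace of the range of `P_{ε₂ n}`.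
-/

namespace OrthonormalBasis

variable {𝕜 E ι : Type*} [RCLike 𝕜] [NormedAddCommGroup E] [InnerProductSpace 𝕜 E] [Fintype ι]
  (b : OrthonormalBasis ι 𝕜 E) (ev : ι → ℝ)

/-- When `b` is an eigenbasis of `H` with eigenvalues `ev`, the projection onto this subspace is the
spectral projector of `H` for the interval `[t, ∞)`. -/
def spanGE (t : ℝ) : Submodule 𝕜 E := Submodule.span 𝕜 (b '' {i | t ≤ ev i})

instance (t : ℝ) : (b.spanGE ev t).HasOrthogonalProjection :=
  have : FiniteDimensional 𝕜 (b.spanGE ev t) :=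
    FiniteDimensional.span_of_finite 𝕜 ((Set.toFinite _).image _)
  inferInstance

variable {b ev}

theorem apply_mem_spanGE {t : ℝ} {i : ι} (hi : t ≤ ev i) : b i ∈ b.spanGE ev t :=
  Submodule.subset_span ⟨i, hi, rfl⟩

theorem inner_starProjection_spanGE (t : ℝ) (i : ι) (x : E) :
    ⟪b i, (b.spanGE ev t).starProjection x⟫_𝕜 = if t ≤ ev i then ⟪b i, x⟫_𝕜 else 0 := by
  split_ifs with hi
  · rw [← Submodule.inner_starProjection_left_eq_right,
      Submodule.starProjection_eq_self_iff.mpr (apply_mem_spanGE hi)]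
  · have hperp : b.spanGE ev t ≤ (𝕜 ∙ b i)ᗮ := by
      refine Submodule.span_le.mpr ?_
      rintro _ ⟨j, hj, rfl⟩
      refine Submodule.mem_orthogonal_singleton_iff_inner_right.mpr (b.orthonormal.2 ?_)
      rintro rfl
      exact hi hj
    exact Submodule.mem_orthogonal_singleton_iff_inner_right.mp
      (hperp (Submodule.starProjection_apply_mem _ x))

theorem mul_norm_le_of_forall_mul_norm_inner_le {c : ℝ} (hc : 0 ≤ c) {x y : E}
    (h : ∀ i, c * ‖⟪b i, x⟫_𝕜‖ ≤ ‖⟪b i, y⟫_𝕜‖) : c * ‖x‖ ≤ ‖y‖ := by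
  refine (pow_le_pow_iff_left₀ (by positivity) (norm_nonneg y) two_ne_zero).mp ?_
  rw [mul_pow, ← b.sum_sq_norm_inner_right, ← b.sum_sq_norm_inner_right, Finset.mul_sum]
  gcongr with i
  rw [← mul_pow]
  exact pow_le_pow_left₀ (by positivity) (h i) 2

theorem antitone_norm_starProjection_spanGE (x : E) :
    Antitone fun t => ‖(b.spanGE ev t).starProjection x‖ := by
  intro s t hst
  simpa only [one_mul] using b.mul_norm_le_of_forall_mul_norm_inner_le zero_le_one fun i => by
    rw [one_mul, inner_starProjection_spanGE, inner_starProjection_spanGE]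
    by_cases ht : t ≤ ev i
    · rw [if_pos ht, if_pos (hst.trans ht)]
    · rw [if_neg ht, norm_zero]
      exact norm_nonneg _

theorem inner_apply_eq_mul_inner {H : E →ₗ[𝕜] E} (hH : H.IsSymmetric)
    (hb : ∀ i, H (b i) = (ev i : 𝕜) • b i) (i : ι) (x : E) :
    ⟪b i, H x⟫_𝕜 = ev i * ⟪b i, x⟫_𝕜 := by
  rw [← hH, hb, inner_smul_left, RCLike.conj_ofReal]

theorem mem_spanGE_of_apply_eq_smul {H : E →ₗ[𝕜] E} (hH : H.IsSymmetric)
    (hb : ∀ i, H (b i) = (ev i : 𝕜) • b i) {v : E} {μ t : ℝ} (hv : H v = (μ : 𝕜) • v)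
    (ht : t ≤ μ) : v ∈ b.spanGE ev t := by
  rw [← b.sum_repr' v]
  refine Submodule.sum_mem _ fun i _ => ?_
  by_cases hi : ev i = μ
  · exact Submodule.smul_mem _ _ (apply_mem_spanGE (hi ▸ ht))
  · have hcoord : ((ev i : 𝕜) - μ) * ⟪b i, v⟫_𝕜 = 0 := by
      rw [sub_mul, ← inner_apply_eq_mul_inner hH hb, hv, inner_smul_right, sub_self]
    rw [(mul_eq_zero.mp hcoord).resolve_left (by exact_mod_cast sub_ne_zero.mpr hi), zero_smul]
    exact zero_mem _

theorem inner_apply_sub_starProjection_spanGE_eq_zero {V : E →L[𝕜] E} {w : ℝ}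
    (hV : ∀ i j, w < |ev i - ev j| → ⟪b i, V (b j)⟫_𝕜 = 0) {i : ι} {t : ℝ} (hi : t ≤ ev i)
    (x : E) : ⟪b i, V (x - (b.spanGE ev (t - w)).starProjection x)⟫_𝕜 = 0 := by
  rw [← b.sum_repr' (x - _), map_sum, inner_sum]
  refine Finset.sum_eq_zero fun j _ => ?_
  rw [map_smul, inner_smul_right]
  by_cases hj : t - w ≤ ev j
  · rw [inner_sub_right, inner_starProjection_spanGE, if_pos hj, sub_self, zero_mul]
  · rw [hV i j (lt_of_lt_of_le (by linarith) (le_abs_self _)), mul_zero]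

section Dynamics

variable {H : E →ₗ[𝕜] E} (hH : H.IsSymmetric) (hb : ∀ i, H (b i) = (ev i : 𝕜) • b i)
  {V : E →L[𝕜] E} {w : ℝ} (hV : ∀ i j, w < |ev i - ev j| → ⟪b i, V (b j)⟫_𝕜 = 0)
  {ψ : E} {ε : ℝ} (hψ : H ψ + V ψ = (ε : 𝕜) • ψ)
include hH hb hV hψ

theorem sub_mul_norm_starProjection_spanGE_le {t : ℝ} (ht : ε ≤ t) :
    (t - ε) * ‖(b.spanGE ev t).starProjection ψ‖
      ≤ ‖V ((b.spanGE ev (t - w)).starProjection ψ)‖ := by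
  refine b.mul_norm_le_of_forall_mul_norm_inner_le (sub_nonneg.mpr ht) fun i => ?_
  rw [inner_starProjection_spanGE]
  split_ifs with hi
  · have hband : ⟪b i, V ((b.spanGE ev (t - w)).starProjection ψ)⟫_𝕜 = ⟪b i, V ψ⟫_𝕜 := by
      rw [eq_comm, ← sub_eq_zero, ← inner_sub_right, ← map_sub]
      exact inner_apply_sub_starProjection_spanGE_eq_zero hV hi ψ
    have hcoord : ⟪b i, V ψ⟫_𝕜 = ((ε - ev i : ℝ) : 𝕜) * ⟪b i, ψ⟫_𝕜 := by
      have := congrArg (⟪b i, ·⟫_𝕜) hψ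
      simp only [inner_add_right, inner_smul_right, inner_apply_eq_mul_inner hH hb] at this
      push_cast
      linear_combination this
    rw [hband, hcoord, norm_mul, RCLike.norm_ofReal, abs_sub_comm]
    gcongr
    exact (by linarith : t - ε ≤ ev i - ε).trans (le_abs_self _)
  · rw [norm_zero, mul_zero]
    exact norm_nonneg _

theorem norm_starProjection_spanGE_add_mul_le {t₀ Δ r : ℝ} (ht₀ : ε < t₀) (hΔ : 0 ≤ Δ)
    (hwΔ : w ≤ Δ) (hVr : ‖V‖ ≤ r * (t₀ - ε)) (j : ℕ) :
    ‖(b.spanGE ev (t₀ + j * Δ)).starProjection ψ‖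
      ≤ r ^ j * ‖(b.spanGE ev t₀).starProjection ψ‖ := by
  set N := fun t => ‖(b.spanGE ev t).starProjection ψ‖
  have hr : 0 ≤ r := nonneg_of_mul_nonneg_left ((norm_nonneg V).trans hVr) (sub_pos.mpr ht₀)
  induction j with
  | zero => simp
  | succ j ih =>
    set t := t₀ + ((j + 1 : ℕ) : ℝ) * Δ with ht
    have ht' : t = t₀ + j * Δ + Δ := by rw [ht]; push_cast; ring
    have hjΔ : 0 ≤ (j : ℝ) * Δ := by positivity
    have ht₀t : t₀ ≤ t := by linarith
    have hprev : N (t - w) ≤ N (t₀ + j * Δ) :=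
      antitone_norm_starProjection_spanGE ψ (by linarith)
    have key : (t - ε) * N t ≤ (t - ε) * (r ^ (j + 1) * N t₀) := calc
      (t - ε) * N t ≤ ‖V ((b.spanGE ev (t - w)).starProjection ψ)‖ :=
          sub_mul_norm_starProjection_spanGE_le hH hb hV hψ (by linarith)
      _ ≤ ‖V‖ * N (t - w) := V.le_opNorm _
      _ ≤ (r * (t₀ - ε)) * (r ^ j * N t₀) :=
          mul_le_mul hVr (hprev.trans ih) (norm_nonneg _) (by positivity)
      _ ≤ (r * (t - ε)) * (r ^ j * N t₀) := by gcongr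
      _ = (t - ε) * (r ^ (j + 1) * N t₀) := by ring
    exact le_of_mul_le_mul_left key (by linarith)

theorem norm_starProjection_spanGE_le_pow {n g ε₁ ε₂ Δ : ℝ} (hn : 0 < n) (hg : 0 ≤ g)
    (hε : ε₁ < ε₂) (hVn : ‖V‖ ≤ g * n) (hε₁ : ε ≤ ε₁ * n) (hΔ : 0 ≤ Δ) (hwΔ : w ≤ Δ) {q : ℕ}
    (hfit : ((ε₂ + ε₁) / 2 + 2 * g) * n + q * Δ ≤ ε₂ * n) :
    ‖(b.spanGE ev (ε₂ * n)).starProjection ψ‖ ≤ (2 * g / (ε₂ - ε₁)) ^ q * ‖ψ‖ := by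
  have hε' : 0 < ε₂ - ε₁ := sub_pos.mpr hε
  have hεt₀ : ε < ((ε₂ + ε₁) / 2 + 2 * g) * n := by nlinarith
  have hVr : ‖V‖ ≤ 2 * g / (ε₂ - ε₁) * (((ε₂ + ε₁) / 2 + 2 * g) * n - ε) := by
    rw [div_mul_eq_mul_div, le_div_iff₀ hε']
    nlinarith [mul_le_mul_of_nonneg_right hVn hε'.le, mul_le_mul_of_nonneg_left hε₁ hg,
      mul_nonneg (mul_nonneg hg hg) hn.le]
  calc ‖(b.spanGE ev (ε₂ * n)).starProjection ψ‖
      ≤ ‖(b.spanGE ev (((ε₂ + ε₁) / 2 + 2 * g) * n + q * Δ)).starProjection ψ‖ :=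
        antitone_norm_starProjection_spanGE ψ hfit
    _ ≤ (2 * g / (ε₂ - ε₁)) ^ q * ‖(b.spanGE ev (((ε₂ + ε₁) / 2 + 2 * g) * n)).starProjection ψ‖ :=
        norm_starProjection_spanGE_add_mul_le hH hb hV hψ hεt₀ hΔ hwΔ hVr q
    _ ≤ (2 * g / (ε₂ - ε₁)) ^ q * ‖ψ‖ := by
        gcongr
        exact Submodule.norm_starProjection_apply_le _ _

end Dynamics

end OrthonormalBasis

theorem IsStarProjection.norm_apply_le_norm_starProjection {𝕜 E : Type*} [RCLike 𝕜]
    [NormedAddCommGroup E] [InnerProductSpace 𝕜 E] [CompleteSpace E] {Q : E →L[𝕜] E}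
    (hQ : IsStarProjection Q) {U : Submodule 𝕜 E} [U.HasOrthogonalProjection]
    (hQU : Q.range ≤ U) (x : E) : ‖Q x‖ ≤ ‖U.starProjection x‖ := by
  obtain ⟨_, hQ⟩ := isStarProjection_iff_eq_starProjection_range.mp hQ
  rw [hQ, ← Submodule.starProjection_comp_starProjection_of_le hQU,
    ContinuousLinearMap.comp_apply]
  exact Submodule.norm_starProjection_apply_le _ _

theorem EuclideanSpace.norm_toLp_eq_sqrt_re_star_dotProduct {𝕜 ι : Type*} [RCLike 𝕜] [Fintype ι]
    (x : ι → 𝕜) : ‖WithLp.toLp 2 x‖ = √(RCLike.re (star x ⬝ᵥ x)) := by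
  rw [norm_eq_sqrt_re_inner (𝕜 := 𝕜), EuclideanSpace.inner_toLp_toLp, dotProduct_comm]

namespace Matrix

variable {𝕜 ι : Type*} [RCLike 𝕜] [Fintype ι] [DecidableEq ι]

theorem IsHermitian.toEuclideanLin_eigenvectorBasis {A : Matrix ι ι 𝕜} (hA : A.IsHermitian)
    (i : ι) : toEuclideanLin A (hA.eigenvectorBasis i) =
      (hA.eigenvalues i : 𝕜) • hA.eigenvectorBasis i := by
  change WithLp.toLp 2 (A *ᵥ (hA.eigenvectorBasis i).ofLp) = _
  rw [hA.mulVec_eigenvectorBasis, ← RCLike.real_smul_eq_coe_smul (K := 𝕜)]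
  rfl

theorem IsHermitian.inner_eigenvectorBasis_toEuclideanCLM_eq_zero {A V : Matrix ι ι 𝕜}
    (hA : A.IsHermitian) {w : ℝ} (hV : ∀ (u v : ι → 𝕜) (lu lv : ℝ),
      A *ᵥ u = (lu : 𝕜) • u → A *ᵥ v = (lv : 𝕜) • v → w < |lu - lv| → star u ⬝ᵥ V *ᵥ v = 0)
    (i j : ι) (hij : w < |hA.eigenvalues i - hA.eigenvalues j|) :
    ⟪hA.eigenvectorBasis i, toEuclideanCLM (n := ι) (𝕜 := 𝕜) V (hA.eigenvectorBasis j)⟫_𝕜 = 0 := by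
  rw [EuclideanSpace.inner_eq_star_dotProduct, dotProduct_comm]
  exact hV _ _ _ _ (congrArg WithLp.ofLp (hA.toEuclideanLin_eigenvectorBasis i))
    (congrArg WithLp.ofLp (hA.toEuclideanLin_eigenvectorBasis j)) hij

theorem isStarProjection_toEuclideanCLM {Q : Matrix ι ι 𝕜} (hself : Qᴴ = Q)
    (hidem : Q * Q = Q) : IsStarProjection (toEuclideanCLM (n := ι) (𝕜 := 𝕜) Q) :=
  IsStarProjection.map ⟨hidem, hself⟩ toEuclideanCLM

theorem IsHermitian.range_toEuclideanCLM_le_spanGE {A Q : Matrix ι ι 𝕜} (hA : A.IsHermitian)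
    {s : ℝ} (hQ : LinearMap.range Q.mulVecLin =
      Submodule.span 𝕜 {v : ι → 𝕜 | ∃ μ : ℝ, s ≤ μ ∧ A *ᵥ v = (μ : 𝕜) • v}) :
    (toEuclideanCLM (n := ι) (𝕜 := 𝕜) Q).range
      ≤ hA.eigenvectorBasis.spanGE hA.eigenvalues s := by
  suffices h : LinearMap.range Q.mulVecLin ≤ (hA.eigenvectorBasis.spanGE hA.eigenvalues s).comap
      (WithLp.linearEquiv 2 𝕜 (ι → 𝕜)).symm.toLinearMap by
    rintro _ ⟨x, rfl⟩
    exact h ⟨x.ofLp, rfl⟩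
  rw [hQ, Submodule.span_le]
  rintro v ⟨μ, hμ, hv⟩
  refine OrthonormalBasis.mem_spanGE_of_apply_eq_smul (isSymmetric_toEuclideanLin_iff.mpr hA)
    hA.toEuclideanLin_eigenvectorBasis ?_ hμ
  change WithLp.toLp 2 (A *ᵥ v) = _
  rw [hv]
  rfl

end Matrix

theorem eigenstate_tail_bound_general {d : ℕ}
    (H₀ V : Matrix (Fin d) (Fin d) ℂ)
    (hH₀ : H₀.IsHermitian)
    (n g w : ℝ) (hn : 1 ≤ n) (hg : 0 < g) (hw : 0 < w)
    (hconnect : ∀ (u v : Fin d → ℂ) (lu lv : ℝ),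
      H₀.mulVec u = (lu : ℂ) • u → H₀.mulVec v = (lv : ℂ) • v → w < |lu - lv| →
        star u ⬝ᵥ V.mulVec v = 0)
    (hVnorm : ‖V‖ ≤ g * n)
    (ε₁ ε₂ E : ℝ) (hε₂ : ε₁ + 4 * g < ε₂)
    (ψ : Fin d → ℂ) (hψ : star ψ ⬝ᵥ ψ = 1)
    (hψeig : (H₀ + V).mulVec ψ = (E : ℂ) • ψ) (hE : E ≤ ε₁ * n)
    (Q : Matrix (Fin d) (Fin d) ℂ)
    (hQ_herm : Qᴴ = Q) (hQ_idem : Q * Q = Q)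
    (hQ_range : LinearMap.range Q.mulVecLin =
      Submodule.span ℂ {v : Fin d → ℂ | ∃ μ : ℝ, ε₂ * n ≤ μ ∧ H₀.mulVec v = (μ : ℂ) • v})
    (ΔE : ℝ) (hΔE : w < ΔE) (qstar : ℕ)
    (hfit : ((ε₂ + ε₁) / 2 + 2 * g) * n + qstar * ΔE ≤ ε₂ * n) :
    Real.sqrt ((star (Q.mulVec ψ) ⬝ᵥ Q.mulVec ψ).re)
      ≤ (2 * g / (ε₂ - ε₁)) ^ qstar := by
  set ψ' := WithLp.toLp 2 ψ
  have hψ' :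
      toEuclideanLin H₀ ψ' + toEuclideanCLM (n := Fin d) (𝕜 := ℂ) V ψ' = (E : ℂ) • ψ' := by
    have := congrArg (WithLp.toLp 2) hψeig
    rwa [add_mulVec] at this
  have hψnorm : ‖ψ'‖ = 1 := by
    rw [EuclideanSpace.norm_toLp_eq_sqrt_re_star_dotProduct, hψ]
    simp
  refine (EuclideanSpace.norm_toLp_eq_sqrt_re_star_dotProduct (Q *ᵥ ψ)).symm.trans_le ?_
  calc ‖toEuclideanCLM (n := Fin d) (𝕜 := ℂ) Q ψ'‖
      ≤ ‖(hH₀.eigenvectorBasis.spanGE hH₀.eigenvalues (ε₂ * n)).starProjection ψ'‖ :=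
        (isStarProjection_toEuclideanCLM hQ_herm hQ_idem).norm_apply_le_norm_starProjection
          (hH₀.range_toEuclideanCLM_le_spanGE hQ_range) ψ'
    _ ≤ (2 * g / (ε₂ - ε₁)) ^ qstar * ‖ψ'‖ :=
        OrthonormalBasis.norm_starProjection_spanGE_le_pow (isSymmetric_toEuclideanLin_iff.mpr hH₀)
          hH₀.toEuclideanLin_eigenvectorBasis
          (hH₀.inner_eigenvectorBasis_toEuclideanCLM_eq_zero hconnect) hψ' (by linarith) hg.le
          (by linarith) hVnorm hE (by linarith) hΔE.le hfit
    _ = (2 * g / (ε₂ - ε₁)) ^ qstar := by rw [hψnorm, mul_one]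

/-- **Tail bound for eigenstates of a locally perturbed Hamiltonian.**
Let `H₀` and `V` be Hermitian, and assume `V` only connects eigenstates of `H₀` whose
energies differ by at most `w`, with `‖V‖ ≤ g n` (operator norm).  Let `ψ` be a unit
eigenvector of `H₀ + V` with eigenvalue `E ≤ ε₁ n`, let `ε₂ > ε₁ + 4g`, and let `Q_>` be
the orthogonal projector onto the span of the eigenvectors of `H₀` with eigenvalue
`≥ ε₂ n`.  Then for every `ΔE > w` and every `q* ≥ 1` with
`((ε₂ + ε₁)/2 + 2g) n + q* ΔE ≤ ε₂ n`, we have `‖Q_> ψ‖ ≤ (2g/(ε₂ − ε₁))^{q*}`. -/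
theorem eigenstate_tail_bound {d : ℕ}
    (H₀ V : Matrix (Fin d) (Fin d) ℂ)
    (hH₀ : H₀.IsHermitian) (hV : V.IsHermitian)
    (n g w : ℝ) (hn : 1 ≤ n) (hg : 0 < g) (hw : 0 < w)
    (hconnect : ∀ (u v : Fin d → ℂ) (lu lv : ℝ),
      H₀.mulVec u = (lu : ℂ) • u → H₀.mulVec v = (lv : ℂ) • v → w < |lu - lv| →
        star u ⬝ᵥ V.mulVec v = 0)
    (hVnorm : ‖V‖ ≤ g * n)
    (ε₁ ε₂ E : ℝ) (hε₂ : ε₁ + 4 * g < ε₂)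
    (ψ : Fin d → ℂ) (hψ : star ψ ⬝ᵥ ψ = 1)
    (hψeig : (H₀ + V).mulVec ψ = (E : ℂ) • ψ) (hE : E ≤ ε₁ * n)
    (Q : Matrix (Fin d) (Fin d) ℂ)
    (hQ_herm : Qᴴ = Q) (hQ_idem : Q * Q = Q)
    (hQ_range : LinearMap.range Q.mulVecLin =
      Submodule.span ℂ {v : Fin d → ℂ | ∃ μ : ℝ, ε₂ * n ≤ μ ∧ H₀.mulVec v = (μ : ℂ) • v})
    (ΔE : ℝ) (hΔE : w < ΔE) (qstar : ℕ) (hqstar : 1 ≤ qstar)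
    (hfit : ((ε₂ + ε₁) / 2 + 2 * g) * n + qstar * ΔE ≤ ε₂ * n) :
    Real.sqrt ((star (Q.mulVec ψ) ⬝ᵥ Q.mulVec ψ).re)
      ≤ (2 * g / (ε₂ - ε₁)) ^ qstar :=
  eigenstate_tail_bound_general H₀ V hH₀ n g w hn hg hw hconnect hVnorm ε₁ ε₂ E hε₂ ψ hψ hψeig hE Q
    hQ_herm hQ_idem hQ_range ΔE hΔE qstar hfit
end
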